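/- arXiv:2106.09133 — 2 statements merged into one kernel-verified Lean document; each statement's English description precedes it below -/
import Mathlib

section
/- Let X be a compact complex n-manifold with balanced metric ω of Hodge-Riemann type, i.e., ω^{n-1}/(n-1)! = ω₀ ∧ Ω₀ with ω₀ positive (1,1), Ω₀ a closed real (n-2,n-2) Hodge-Riemann form for degree (1,1), and ω₀ ∧ Ω₀ closed. Let (E, h, D) be a Hermitian vector bundle with unitary-compatible complex connection whose curvature F_D is of type (1,1), satisfies F_D ∧ ω₀ ∧ Ω₀ = 0, and ∫_X tr(F_D ∧ F_D) ∧ Ω₀ = 0. Then F_D = 0, i.e., D is flat. -/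
open scoped ComplexOrder

/-- An abstract model of the graded algebra of smooth complex-valued differential
forms on a compact Hermitian complex manifold `(X, ω)` of complex dimension `n`,
together with the standard operators of Hermitian geometry: the type
decomposition into `(p,q)`-forms, conjugation, the Dolbeault operators `∂`, `∂̄`,
integration over `X`, the `L²` inner product with the formal adjoints `∂*`,
`∂̄*`, `d*`, the dual Lefschetz operator `Λ`, and positivity notions. -/
structure CpxMfd (n : ℕ) where
  /-- the smooth complex-valued differential forms on `X` -/
  A : Type
  [ringA : Ring A]
  [algC : Algebra ℂ A]
  [algR : Algebra ℝ A]
  [tower : IsScalarTower ℝ ℂ A]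
  /-- forms of type `(p,q)` -/
  Λ : ℕ → ℕ → Submodule ℂ A
  mul_mem : ∀ {p q r s : ℕ} {a b : A}, a ∈ Λ p q → b ∈ Λ r s → a * b ∈ Λ (p + r) (q + s)
  one_mem : (1 : A) ∈ Λ 0 0
  /-- complex conjugation of forms -/
  conj : A →ₗ[ℝ] A
  conj_conj : ∀ a, conj (conj a) = a
  conj_mul : ∀ a b, conj (a * b) = conj a * conj b
  conj_smul : ∀ (c : ℂ) (a : A), conj (c • a) = starRingEnd ℂ c • conj a
  conj_mem : ∀ {p q : ℕ} {a : A}, a ∈ Λ p q → conj a ∈ Λ q p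
  /-- the Dolbeault operator `∂` -/
  pa : A →ₗ[ℂ] A
  /-- the Dolbeault operator `∂̄` -/
  pb : A →ₗ[ℂ] A
  pa_mem : ∀ {p q : ℕ} {a : A}, a ∈ Λ p q → pa a ∈ Λ (p + 1) q
  pb_mem : ∀ {p q : ℕ} {a : A}, a ∈ Λ p q → pb a ∈ Λ p (q + 1)
  conj_pa : ∀ a, conj (pa a) = pb (conj a)
  /-- integration of (top-degree) forms over the compact manifold `X` -/
  integral : A →ₗ[ℝ] ℂ
  /-- Stokes' theorem: the integral of an exact form vanishes -/
  stokes : ∀ a, integral (pa a + pb a) = 0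
  /-- `pos11 a` : `a` is a (strictly) positive real `(1,1)`-form -/
  pos11 : A → Prop
  pos11_mem : ∀ {a}, pos11 a → a ∈ Λ 1 1 ∧ conj a = a
  /-- the fundamental `(1,1)`-form of the Hermitian metric on `X` -/
  ω : A
  ω_pos : pos11 ω
  /-- `posFn f` : `f` is a (strictly) positive smooth function -/
  posFn : A → Prop
  posFn_mem : ∀ {a}, posFn a → a ∈ Λ 0 0 ∧ conj a = a
  /-- `stronglyPos k a` : `a` is a strongly positive `(k,k)`-form -/
  stronglyPos : ℕ → A → Prop
  stronglyPos_one : stronglyPos 0 1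
  stronglyPos_mul : ∀ {a k b}, pos11 a → stronglyPos k b → stronglyPos (k + 1) (a * b)
  /-- `nonposTop a` : the top-degree form `a` is pointwise nonpositive -/
  nonposTop : A → Prop
  nonposTop_integral : ∀ {a}, nonposTop a → integral a ≤ 0
  /-- the `L²` hermitian inner product of forms determined by `ω` -/
  inner : A → A → ℂ
  /-- the formal adjoint `∂*` -/
  adjPa : A →ₗ[ℂ] A
  adjPa_spec : ∀ a b, inner (pa a) b = inner a (adjPa b)
  /-- the formal adjoint `∂̄*` -/
  adjPb : A →ₗ[ℂ] A
  adjPb_spec : ∀ a b, inner (pb a) b = inner a (adjPb b)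
  /-- the formal adjoint `d*` -/
  adjD : A →ₗ[ℂ] A
  adjD_spec : ∀ a b, inner (pa a + pb a) b = inner a (adjD b)
  /-- the dual Lefschetz operator `Λ`, the adjoint of wedging with `ω` -/
  lam : A →ₗ[ℂ] A
  lam_spec : ∀ a b, inner (ω * a) b = inner a (lam b)

attribute [instance] CpxMfd.ringA CpxMfd.algC CpxMfd.algR CpxMfd.tower

namespace CpxMfd

variable {n : ℕ} (M : CpxMfd n)

/-- the exterior derivative `d = ∂ + ∂̄` -/
def d : M.A →ₗ[ℂ] M.A := M.pa + M.pb

/-- a form is real if it is fixed by conjugation -/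
def IsReal (a : M.A) : Prop := M.conj a = a

/-- `ω` is a balanced hermitian metric of Hodge-Riemann type with respect to the
decomposition `ω^(n-1)/(n-1)! = ω₀ ∧ Ω₀`:  `ω₀` is a positive `(1,1)`-form,
`Ω₀` is a closed real `(n-2,n-2)`-form which satisfies the Hodge-Riemann
positivity property in degrees `(p,q)`, `p + q = 2` (on `(ω₀,Ω₀)`-primitive
forms in degree `(1,1)`), and `ω₀ ∧ Ω₀` is closed (equivalently, `ω` is
balanced). -/
def IsBalancedHR (ω ω₀ Ω₀ : M.A) : Prop :=
  M.pos11 ω ∧ M.pos11 ω₀ ∧ Ω₀ ∈ M.Λ (n - 2) (n - 2) ∧ M.IsReal Ω₀ ∧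
    (((n - 1).factorial : ℂ))⁻¹ • ω ^ (n - 1) = ω₀ * Ω₀ ∧
    M.d Ω₀ = 0 ∧ M.d (ω₀ * Ω₀) = 0 ∧
    (∀ α ∈ M.Λ 1 1, α * (ω₀ * Ω₀) = 0 → α ≠ 0 →
      0 < -M.integral (α * M.conj α * Ω₀)) ∧
    (∀ α ∈ M.Λ 2 0, α ≠ 0 → 0 < M.integral (α * M.conj α * Ω₀))

end CpxMfd

/-- the hermitian adjoint of a matrix of forms (i.e. of an `End(E)`-valued form
written in a unitary frame of a hermitian bundle `(E,h)`) -/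
def madj {n r : ℕ} (M : CpxMfd n) (f : Matrix (Fin r) (Fin r) M.A) :
    Matrix (Fin r) (Fin r) M.A :=
  Matrix.of fun i j => M.conj (f j i)

/-- on a compact complex `n`-manifold with a balanced metric `ω`
of Hodge-Riemann type (`ω^(n-1)/(n-1)! = ω₀ ∧ Ω₀`), if `(E, h, D)` is a
hermitian bundle with a unitary-compatible complex connection whose curvature
`F_D` is of type `(1,1)` (with `√-1 F_D` hermitian), primitive
(`F_D ∧ ω₀ ∧ Ω₀ = 0`), and satisfies `∫_X tr(F_D ∧ F_D) ∧ Ω₀ = 0`, then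
`F_D = 0`, i.e. `D` is flat. -/
theorem flat_of_primitive_of_ch2_zero {n r : ℕ} (M : CpxMfd n) (ω₀ Ω₀ : M.A)
    (hBHR : M.IsBalancedHR M.ω ω₀ Ω₀)
    (F : Matrix (Fin r) (Fin r) M.A)
    (h11 : ∀ i j, F i j ∈ M.Λ 1 1)
    (hherm : ∀ i j, M.conj (F i j) = -F j i)
    (hprim : ∀ i j, F i j * (ω₀ * Ω₀) = 0)
    (hch2 : M.integral (Matrix.trace (F * F) * Ω₀) = 0) :
    F = 0 := by
  obtain ⟨-, -, -, -, -, -, -, hHR, -⟩ := hBHR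
  have hterm : ∀ i j : Fin r,
      0 ≤ -M.integral (F i j * M.conj (F i j) * Ω₀) := by
    intro i j
    by_cases h : F i j = 0
    · simp [h]
    · exact le_of_lt (hHR (F i j) (h11 i j) (hprim i j) h)
  have hsum : ∑ i : Fin r, ∑ j : Fin r,
      (-M.integral (F i j * M.conj (F i j) * Ω₀)) = 0 := by
    have htr : Matrix.trace (F * F) * Ω₀
        = ∑ i : Fin r, ∑ j : Fin r, -(F i j * M.conj (F i j) * Ω₀) := by
      rw [Matrix.trace]
      simp only [Matrix.diag, Matrix.mul_apply, Finset.sum_mul]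
      refine Finset.sum_congr rfl fun i _ => Finset.sum_congr rfl fun j _ => ?_
      rw [hherm i j]
      simp [mul_neg, neg_mul]
    have := hch2
    rw [htr] at this
    rw [map_sum] at this
    simp only [map_sum, map_neg] at this ⊢
    exact this
  have hzero : ∀ i : Fin r, ∀ j : Fin r,
      (-M.integral (F i j * M.conj (F i j) * Ω₀)) = 0 := by
    have h1 := (Finset.sum_eq_zero_iff_of_nonneg (fun i _ =>
      Finset.sum_nonneg fun j _ => hterm i j)).mp hsum
    intro i j
    exact (Finset.sum_eq_zero_iff_of_nonneg (fun j _ => hterm i j)).mp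
      (h1 i (Finset.mem_univ i)) j (Finset.mem_univ j)
  ext i j
  by_contra h
  exact absurd (hzero i j) (ne_of_gt (hHR (F i j) (h11 i j) (hprim i j) h))
end

section
/- Let X be a compact complex n-manifold with a balanced metric ω of Hodge-Riemann type (ω^{n-1}/(n-1)! = ω₀ ∧ Ω₀, Ω₀ closed and pointwise Hodge-Riemann for (1,1)). If a rank r holomorphic vector bundle E admits a Hermitian-Einstein metric h, i.e. √-1 F_{(E,h)} ∧ ω₀ ∧ Ω₀ = λ · Id · ω₀² ∧ Ω₀, then ∫_X (2r c₂(E) - (r-1) c₁(E)²) ∧ Ω₀ ≥ 0, with equality if and only if the trace-free part of F_{(E,h)} vanishes (E is projectively flat). -/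
open scoped ComplexOrder

namespace Matrix

variable {ι K A : Type*} [Fintype ι] [DecidableEq ι] [Field K] [Ring A] [Algebra K A]

variable (K) in
def tracelessPart (F : Matrix ι ι A) : Matrix ι ι A :=
  F - diagonal fun _ => (Fintype.card ι : K)⁻¹ • trace F

theorem tracelessPart_apply (F : Matrix ι ι A) (i j : ι) :
    tracelessPart K F i j = F i j - if i = j then (Fintype.card ι : K)⁻¹ • trace F else 0 := by
  simp only [tracelessPart, sub_apply, diagonal_apply]

theorem tracelessPart_eq_zero_iff (F : Matrix ι ι A) :
    tracelessPart K F = 0 ↔ F = diagonal fun _ => (Fintype.card ι : K)⁻¹ • trace F :=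
  sub_eq_zero

theorem tracelessPart_mem (P : Submodule K A) {F : Matrix ι ι A} (hF : ∀ i j, F i j ∈ P)
    (i j : ι) : tracelessPart K F i j ∈ P := by
  have htrace : trace F ∈ P := Submodule.sum_mem _ fun k _ => hF k k
  rw [tracelessPart_apply]
  split_ifs
  · exact P.sub_mem (hF i j) (P.smul_mem _ htrace)
  · simpa using hF i j

theorem trace_mul_diagonal_const (F : Matrix ι ι A) (a : A) :
    trace (F * diagonal fun _ : ι => a) = trace F * a := by
  simp only [trace, diag, mul_diagonal, Finset.sum_mul]

theorem trace_diagonal_const_mul (F : Matrix ι ι A) (a : A) :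
    trace ((diagonal fun _ : ι => a) * F) = a * trace F := by
  simp only [trace, diag, diagonal_mul, Finset.mul_sum]

theorem trace_tracelessPart_mul_self {F : Matrix ι ι A} (hcard : (Fintype.card ι : K) ≠ 0) :
    trace (tracelessPart K F * tracelessPart K F) =
      trace (F * F) - (Fintype.card ι : K)⁻¹ • (trace F * trace F) := by
  set c := (Fintype.card ι : K)⁻¹
  have hdiag : trace ((diagonal fun _ : ι => c • trace F) * diagonal fun _ : ι => c • trace F) =
      c • (trace F * trace F) := by
    rw [diagonal_mul_diagonal, trace_diagonal, Finset.sum_const, Finset.card_univ,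
      ← Nat.cast_smul_eq_nsmul K, smul_mul_smul, smul_smul, ← mul_assoc,
      mul_inv_cancel₀ hcard, one_mul]
  rw [tracelessPart, sub_mul, mul_sub, mul_sub, trace_sub, trace_sub, trace_sub,
    trace_mul_diagonal_const, trace_diagonal_const_mul, hdiag, mul_smul_comm, smul_mul_assoc]
  abel

theorem tracelessPart_mul_eq_zero {F : Matrix ι ι A} (hcard : (Fintype.card ι : K) ≠ 0)
    {a b : K} (ha : a ≠ 0) {W V : A}
    (hF : ∀ i j, a • (F i j * W) = (if i = j then b else 0) • V) (i j : ι) :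
    tracelessPart K F i j * W = 0 := by
  have htrace : a • (trace F * W) = (Fintype.card ι : K) • b • V := by
    simp only [trace, diag, Finset.sum_mul, Finset.smul_sum, hF, if_pos, Finset.sum_const,
      Finset.card_univ, ← Nat.cast_smul_eq_nsmul K]
  refine smul_right_injective A ha ?_
  simp only [tracelessPart_apply, sub_mul, smul_sub, hF]
  split_ifs
  · rw [smul_mul_assoc, smul_comm, htrace, smul_smul, inv_mul_cancel₀ hcard, one_smul,
      smul_zero, sub_self]
  · simp

end Matrix

open Matrix

theorem bogomolov_integrand_eq {A : Type*} [Ring A] [Algebra ℂ A] {r : ℕ} (hr : (r : ℂ) ≠ 0)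
    (x y : A) :
    (2 * r : ℂ) • (((8 : ℂ) * (Real.pi : ℂ) ^ 2)⁻¹ • (x - y * y))
        - ((r : ℂ) - 1) • ((Complex.I / (2 * (Real.pi : ℂ))) • y *
          (Complex.I / (2 * (Real.pi : ℂ))) • y) =
      ((r / (4 * Real.pi ^ 2) : ℝ) : ℂ) • (x - (r : ℂ)⁻¹ • (y * y)) := by
  have hπ : (Real.pi : ℂ) ≠ 0 := Complex.ofReal_ne_zero.mpr Real.pi_ne_zero
  rw [smul_mul_smul]
  match_scalars
  · field_simp
    ring
  · field_simp
    rw [Complex.I_sq]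
    ring

namespace CpxMfd

variable {n : ℕ} (M : CpxMfd n)

theorem integral_ofReal_smul (c : ℝ) (a : M.A) :
    M.integral ((c : ℂ) • a) = c * M.integral a := by
  rw [← Complex.real_smul]
  -- the `ℝ`-module structure on `M.A` seen by `M.integral` is the one restricted from `ℂ`
  exact M.integral.map_smul c a

noncomputable def hrNormSq (Ω₀ α : M.A) : ℂ := -M.integral (α * M.conj α * Ω₀)

def IsPrimitive11 (ω₀ Ω₀ α : M.A) : Prop := α ∈ M.Λ 1 1 ∧ α * (ω₀ * Ω₀) = 0

@[simp]
theorem hrNormSq_zero (Ω₀ : M.A) : M.hrNormSq Ω₀ 0 = 0 := by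
  simp [hrNormSq]

variable {M} {ω ω₀ Ω₀ : M.A}

theorem IsBalancedHR.hrNormSq_pos (h : M.IsBalancedHR ω ω₀ Ω₀) {α : M.A}
    (hα : M.IsPrimitive11 ω₀ Ω₀ α) (hne : α ≠ 0) : 0 < M.hrNormSq Ω₀ α :=
  h.2.2.2.2.2.2.2.1 α hα.1 hα.2 hne

theorem IsBalancedHR.hrNormSq_nonneg (h : M.IsBalancedHR ω ω₀ Ω₀) {α : M.A}
    (hα : M.IsPrimitive11 ω₀ Ω₀ α) : 0 ≤ M.hrNormSq Ω₀ α := by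
  rcases eq_or_ne α 0 with rfl | hne
  · simp
  · exact (h.hrNormSq_pos hα hne).le

theorem IsBalancedHR.hrNormSq_eq_zero_iff (h : M.IsBalancedHR ω ω₀ Ω₀) {α : M.A}
    (hα : M.IsPrimitive11 ω₀ Ω₀ α) : M.hrNormSq Ω₀ α = 0 ↔ α = 0 := by
  refine ⟨fun h0 => ?_, fun h0 => h0 ▸ hrNormSq_zero M Ω₀⟩
  by_contra hne
  exact (h.hrNormSq_pos hα hne).ne' h0

variable {ι : Type*} [Fintype ι] {G : Matrix ι ι M.A}

theorem IsBalancedHR.sum_hrNormSq_nonneg (h : M.IsBalancedHR ω ω₀ Ω₀)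
    (hG : ∀ i j, M.IsPrimitive11 ω₀ Ω₀ (G i j)) :
    0 ≤ ∑ i, ∑ j, M.hrNormSq Ω₀ (G i j) :=
  Finset.sum_nonneg fun i _ => Finset.sum_nonneg fun j _ => h.hrNormSq_nonneg (hG i j)

theorem IsBalancedHR.sum_hrNormSq_eq_zero_iff (h : M.IsBalancedHR ω ω₀ Ω₀)
    (hG : ∀ i j, M.IsPrimitive11 ω₀ Ω₀ (G i j)) :
    ∑ i, ∑ j, M.hrNormSq Ω₀ (G i j) = 0 ↔ G = 0 := by
  have hrow (i : ι) : 0 ≤ ∑ j, M.hrNormSq Ω₀ (G i j) :=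
    Finset.sum_nonneg fun j _ => h.hrNormSq_nonneg (hG i j)
  simp only [Fintype.sum_eq_zero_iff_of_nonneg hrow, funext_iff, Pi.zero_apply,
    Fintype.sum_eq_zero_iff_of_nonneg fun j => h.hrNormSq_nonneg (hG _ j),
    h.hrNormSq_eq_zero_iff (hG _ _)]
  exact ⟨fun hG' => Matrix.ext hG', fun hG' i j => by rw [hG', Matrix.zero_apply]⟩

theorem integral_trace_mul_self_mul (hG : ∀ i j, M.conj (G i j) = -G j i) :
    M.integral (trace (G * G) * Ω₀) = ∑ i, ∑ j, M.hrNormSq Ω₀ (G i j) := by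
  simp only [trace, diag, mul_apply, Finset.sum_mul, map_sum, hrNormSq, hG, mul_neg, neg_mul,
    map_neg, neg_neg]

theorem conj_trace {F : Matrix ι ι M.A} (hF : ∀ i j, M.conj (F i j) = -F j i) :
    M.conj (trace F) = -trace F := by
  simp only [trace, diag, map_sum, hF, Finset.sum_neg_distrib]

theorem conj_tracelessPart [DecidableEq ι] {F : Matrix ι ι M.A}
    (hF : ∀ i j, M.conj (F i j) = -F j i) (i j : ι) :
    M.conj (tracelessPart ℂ F i j) = -tracelessPart ℂ F j i := by
  rcases eq_or_ne i j with rfl | hij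
  · simp only [tracelessPart_apply, if_true, map_sub, hF, M.conj_smul, conj_trace hF, map_inv₀,
      map_natCast, smul_neg]
    abel
  · simp [tracelessPart_apply, hij, hij.symm, hF]

end CpxMfd

/-- Bogomolov-Miyaoka-Yau inequality: on a compact complex
`n`-manifold with a balanced metric `ω` of Hodge-Riemann type
(`ω^(n-1)/(n-1)! = ω₀ ∧ Ω₀`), if a rank `r` holomorphic bundle `E` carries a
Hermitian-Einstein metric `h`, i.e. the curvature `F` of the Chern connection
satisfies `√-1 F ∧ ω₀ ∧ Ω₀ = λ · Id · ω₀² ∧ Ω₀`, then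
`∫_X (2r c₂(E) - (r-1) c₁(E)²) ∧ Ω₀ ≥ 0`, where
`c₁ = (√-1/2π) tr F` and `c₂ = (1/8π²)(tr(F ∧ F) - tr F ∧ tr F)`, with
equality iff the trace-free part of `F` vanishes (`E` is projectively flat). -/
theorem bmy_inequality {n r : ℕ} (hr : 0 < r) (M : CpxMfd n) (ω₀ Ω₀ : M.A)
    (hBHR : M.IsBalancedHR M.ω ω₀ Ω₀)
    (F : Matrix (Fin r) (Fin r) M.A)
    (h11 : ∀ i j, F i j ∈ M.Λ 1 1)
    (hherm : ∀ i j, M.conj (F i j) = -F j i)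
    (lam : ℝ)
    (hHE : ∀ i j, Complex.I • (F i j * (ω₀ * Ω₀)) =
      (if i = j then (lam : ℂ) else 0) • (ω₀ ^ 2 * Ω₀)) :
    0 ≤ M.integral
        (((2 * r : ℂ) • (((8 : ℂ) * (Real.pi : ℂ) ^ 2)⁻¹ •
              (Matrix.trace (F * F) - Matrix.trace F * Matrix.trace F))
            - ((r : ℂ) - 1) • ((Complex.I / (2 * (Real.pi : ℂ))) • Matrix.trace F *
                (Complex.I / (2 * (Real.pi : ℂ))) • Matrix.trace F)) * Ω₀) ∧
      (M.integral
        (((2 * r : ℂ) • (((8 : ℂ) * (Real.pi : ℂ) ^ 2)⁻¹ •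
              (Matrix.trace (F * F) - Matrix.trace F * Matrix.trace F))
            - ((r : ℂ) - 1) • ((Complex.I / (2 * (Real.pi : ℂ))) • Matrix.trace F *
                (Complex.I / (2 * (Real.pi : ℂ))) • Matrix.trace F)) * Ω₀) = 0 ↔
        F = Matrix.of fun i j =>
          if i = j then (r : ℂ)⁻¹ • Matrix.trace F else 0) := by
  have hr' : (r : ℂ) ≠ 0 := by exact_mod_cast hr.ne'
  have hcard : (Fintype.card (Fin r) : ℂ) ≠ 0 := by rwa [Fintype.card_fin]
  have hprim (i j : Fin r) : M.IsPrimitive11 ω₀ Ω₀ (tracelessPart ℂ F i j) :=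
    ⟨tracelessPart_mem _ h11 i j, tracelessPart_mul_eq_zero hcard Complex.I_ne_zero hHE i j⟩
  have htrace : trace (F * F) - (r : ℂ)⁻¹ • (trace F * trace F) =
      trace (tracelessPart ℂ F * tracelessPart ℂ F) := by
    simpa using (trace_tracelessPart_mul_self hcard).symm
  have hc : 0 < (r : ℝ) / (4 * Real.pi ^ 2) := by positivity
  rw [bogomolov_integrand_eq hr', smul_mul_assoc, M.integral_ofReal_smul,
    htrace, M.integral_trace_mul_self_mul (M.conj_tracelessPart hherm)]
  refine ⟨mul_nonneg (by exact_mod_cast hc.le) (hBHR.sum_hrNormSq_nonneg hprim), ?_⟩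
  rw [mul_eq_zero, hBHR.sum_hrNormSq_eq_zero_iff hprim, tracelessPart_eq_zero_iff]
  simp only [Complex.ofReal_eq_zero, hc.ne', false_or, Fintype.card_fin]
  rfl
end
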